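/- arXiv:1310.4802 — 4 statements merged into one kernel-verified Lean document; each statement's English description precedes it below -/
import Mathlib

section
/- Let t > 0 and k > 1 be real numbers and let p_0, p_1, p_2, p_3 be real numbers with 0 < p_i < 1 for each i. Suppose T : ℝ × ℕ → ℝ satisfies T(n, r) = 1 whenever n ≤ t·k^r and T(n, r) = 1 + ∑_{i=0}^{3} T(p_i·(n − t·k^r), r + 1) whenever n > t·k^r, and suppose T' : ℝ → ℝ satisfies T'(n) = 1 whenever n ≤ t and T'(n) = 1 + ∑_{i=0}^{3} T'(p_i·(n − t)/k) whenever n > t. Then for every real n and every natural number r, T(n, r) = T'(n / k^r). -/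
/-!
`(n, r) ↦ T' (n / k ^ r)` satisfies the same recurrence as `T`, and that recurrence has only one
solution: by induction on `N`, two solutions agree wherever `n ≤ t * N * k ^ r`, because a
recursive call removes the threshold `t * k ^ r` from the argument, never enlarges it
(`p i ≤ 1`), and moves to a level whose threshold is no smaller (`k ≥ 1`).
-/

open Finset

structure DNTreeRecurrence {ι : Type*} [Fintype ι] (t k : ℝ) (p : ι → ℝ) (T : ℝ × ℕ → ℝ) :
    Prop where
  base : ∀ (n : ℝ) (r : ℕ), n ≤ t * k ^ r → T (n, r) = 1
  step : ∀ (n : ℝ) (r : ℕ), n > t * k ^ r → T (n, r) = 1 + ∑ i, T (p i * (n - t * k ^ r), r + 1)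

namespace DNTreeRecurrence

variable {ι : Type*} [Fintype ι] {t k : ℝ} {p : ι → ℝ}

lemma child_le_mul_pow_succ {q n : ℝ} {N r : ℕ} (ht : 0 ≤ t) (hk : 1 ≤ k) (hq : q ≤ 1)
    (hn : n ≤ t * (N + 1) * k ^ r) (hsat : t * k ^ r < n) :
    q * (n - t * k ^ r) ≤ t * N * k ^ (r + 1) := by
  have hexcess : 0 ≤ n - t * k ^ r := by linarith
  calc q * (n - t * k ^ r) ≤ n - t * k ^ r := mul_le_of_le_one_left hexcess hq
    _ ≤ t * N * k ^ r := by linarith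
    _ ≤ t * N * k ^ (r + 1) :=
        mul_le_mul_of_nonneg_left (pow_le_pow_right₀ hk r.le_succ) (by positivity)

lemma eq_of_le_mul_pow {T₁ T₂ : ℝ × ℕ → ℝ} (h₁ : DNTreeRecurrence t k p T₁)
    (h₂ : DNTreeRecurrence t k p T₂) (ht : 0 < t) (hk : 1 ≤ k) (hp : ∀ i, p i ≤ 1) (N : ℕ) :
    ∀ (n : ℝ) (r : ℕ), n ≤ t * N * k ^ r → T₁ (n, r) = T₂ (n, r) := by
  induction N with
  | zero =>
    intro n r hn
    have hsat : n ≤ t * k ^ r := by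
      have : 0 ≤ t * k ^ r := by positivity
      simp only [Nat.cast_zero, mul_zero, zero_mul] at hn
      linarith
    rw [h₁.base n r hsat, h₂.base n r hsat]
  | succ N ih =>
    intro n r hn
    rcases le_or_gt n (t * k ^ r) with hsat | hsat
    · rw [h₁.base n r hsat, h₂.base n r hsat]
    · rw [h₁.step n r hsat, h₂.step n r hsat]
      push_cast at hn
      congr 1
      refine sum_congr rfl fun i _ ↦ ih _ _ ?_
      exact child_le_mul_pow_succ ht.le hk (hp i) hn hsat

lemma eq {T₁ T₂ : ℝ × ℕ → ℝ} (h₁ : DNTreeRecurrence t k p T₁)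
    (h₂ : DNTreeRecurrence t k p T₂) (ht : 0 < t) (hk : 1 ≤ k) (hp : ∀ i, p i ≤ 1) :
    T₁ = T₂ := by
  funext ⟨n, r⟩
  have hthr : 0 < t * k ^ r := by positivity
  obtain ⟨N, hN⟩ := exists_nat_ge (n / (t * k ^ r))
  refine h₁.eq_of_le_mul_pow h₂ ht hk hp N n r ?_
  rw [div_le_iff₀ hthr] at hN
  linarith

lemma of_one_param {T' : ℝ → ℝ} (hk : 0 < k) (hT'_base : ∀ n : ℝ, n ≤ t → T' n = 1)
    (hT'_rec : ∀ n : ℝ, n > t → T' n = 1 + ∑ i, T' (p i * (n - t) / k)) :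
    DNTreeRecurrence t k p (fun x ↦ T' (x.1 / k ^ x.2)) where
  base n r hn := hT'_base _ ((div_le_iff₀ (pow_pos hk r)).2 hn)
  step n r hn := by
    have hkr : 0 < k ^ r := pow_pos hk r
    rw [hT'_rec _ ((lt_div_iff₀ hkr).2 hn)]
    congr 1
    refine sum_congr rfl fun i _ ↦ congrArg T' ?_
    field_simp
    ring

end DNTreeRecurrence

/-- If `T : ℝ × ℕ → ℝ` satisfies the two-parameter DN-tree size
recurrence with thresholds `t·k^r`, and `T' : ℝ → ℝ` satisfies the one-parameter
version with constant threshold `t` and argument divided by `k`, then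
`T (n, r) = T' (n / k ^ r)` for all real `n` and natural `r`. -/
theorem dn_tree_two_param_eq_one_param
    (t k : ℝ) (ht : 0 < t) (hk : 1 < k)
    (p : Fin 4 → ℝ) (hp : ∀ i, 0 < p i ∧ p i < 1)
    (T : ℝ × ℕ → ℝ)
    (hT_base : ∀ (n : ℝ) (r : ℕ), n ≤ t * k ^ r → T (n, r) = 1)
    (hT_rec : ∀ (n : ℝ) (r : ℕ), n > t * k ^ r →
      T (n, r) = 1 + ∑ i : Fin 4, T (p i * (n - t * k ^ r), r + 1))
    (T' : ℝ → ℝ)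
    (hT'_base : ∀ n : ℝ, n ≤ t → T' n = 1)
    (hT'_rec : ∀ n : ℝ, n > t →
      T' n = 1 + ∑ i : Fin 4, T' (p i * (n - t) / k)) :
    ∀ (n : ℝ) (r : ℕ), T (n, r) = T' (n / k ^ r) := by
  have hT : DNTreeRecurrence t k p T := ⟨hT_base, hT_rec⟩
  have hT' := DNTreeRecurrence.of_one_param (p := p) (zero_lt_one.trans hk) hT'_base hT'_rec
  intro n r
  exact congrFun (hT.eq hT' ht hk.le fun i ↦ (hp i).2.le) (n, r)
end

section
/- Let t > 0 and k > 1 be real numbers, and let p_0, p_1, p_2, p_3 be real numbers with 0 < p_i < 1 for each i and p_0 + p_1 + p_2 + p_3 = 1. Suppose T' : ℝ → ℝ satisfies T'(n) = 1 whenever n ≤ t and T'(n) = 1 + ∑_{i=0}^{3} T'(p_i·(n − t)/k) whenever n > t. Then T'(N) = Θ(N^s) as N → ∞, where s is the real number satisfying p_0^s + p_1^s + p_2^s + p_3^s = k^s; that is, there exist constants 0 < c_1 ≤ c_2 and N_0 such that c_1·N^s ≤ T'(N) ≤ c_2·N^s for all N ≥ N_0. -/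
/-!
Write `cᵢ(n) = pᵢ (n - t) / k` for the children of `n`. The exponent `s` is the one for which
`x ↦ x ^ s` is additive along the recursion, `∑ᵢ (pᵢ x / k) ^ s = x ^ s`, and the constraints on
the `pᵢ` and on `k` force `0 < s < 1`. The lower bound `(n / t) ^ s ≤ T n` propagates through the
recursion because `x ↦ x ^ s` is subadditive, so the loss from the shift by `t` is paid for by the
`+ 1`. For the upper bound, `T + 1 / (d - 1)`, with `d` the number of children, satisfies the
homogeneous recursion, so `T n + 1 / (d - 1) ≤ C n ^ s` propagates from a bounded initial range
`[t, n₂]` beyond which all children are again at least `t`.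
-/

open Finset Filter

lemma mem_Ioo_of_sum_rpow_eq_rpow {ι : Type*} [Fintype ι] {p : ι → ℝ} {k s : ℝ}
    (hp : ∀ i, 0 < p i ∧ p i < 1) (hpsum : ∑ i, p i = 1) (hk : 1 < k)
    (hs : ∑ i, p i ^ s = k ^ s) : s ∈ Set.Ioo 0 1 := by
  have hne : (univ : Finset ι).Nonempty := by
    by_contra h
    simp [not_nonempty_iff_eq_empty.1 h] at hpsum
  constructor
  · by_contra! h
    have : ∑ i, p i < ∑ i, p i ^ s := sum_lt_sum_of_nonempty hne fun i _ =>
      (hp i).2.trans_le (Real.one_le_rpow_of_pos_of_le_one_of_nonpos (hp i).1 (hp i).2.le h)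
    linarith [Real.rpow_le_one_of_one_le_of_nonpos hk.le h]
  · by_contra! h
    have : ∑ i, p i ^ s ≤ ∑ i, p i := sum_le_sum fun i _ => by
      simpa using Real.rpow_le_rpow_of_exponent_ge (hp i).1 (hp i).2.le h
    linarith [Real.one_lt_rpow hk (by linarith : (0:ℝ) < s)]

lemma sum_rpow_mul_div_eq {ι : Type*} [Fintype ι] {p : ι → ℝ} {k s : ℝ} (hp : ∀ i, 0 ≤ p i)
    (hk : 0 < k) (hs : ∑ i, p i ^ s = k ^ s) {x : ℝ} (hx : 0 ≤ x) :
    ∑ i, (p i * x / k) ^ s = x ^ s := by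
  have hks : 0 < k ^ s := Real.rpow_pos_of_pos hk s
  calc ∑ i, (p i * x / k) ^ s = (∑ i, p i ^ s) * x ^ s / k ^ s := by
        simp only [sum_mul, sum_div, Real.div_rpow (mul_nonneg (hp _) hx) hk.le,
          Real.mul_rpow (hp _) hx]
    _ = x ^ s := by rw [hs]; field_simp

lemma induction_on_children {ι : Type*} {p : ι → ℝ} {t k : ℝ} {P : ℝ → Prop} (ht : 0 < t)
    (hk : 1 < k) (hp : ∀ i, 0 ≤ p i ∧ p i ≤ 1) (base : ∀ n ≤ t, P n)
    (step : ∀ n, t < n → (∀ i, P (p i * (n - t) / k)) → P n) (n : ℝ) : P n := by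
  have hk0 : 0 < k := one_pos.trans hk
  suffices h : ∀ m : ℕ, ∀ n ≤ t * k ^ m, P n by
    obtain ⟨m, hm⟩ := pow_unbounded_of_one_lt (n / t) hk
    exact h m n ((div_lt_iff₀' ht).1 hm).le
  intro m
  induction m with
  | zero => simpa using base
  | succ m ih =>
    intro n hn
    rcases le_or_gt n t with hnt | hnt
    · exact base n hnt
    refine step n hnt fun i => ih _ ?_
    rw [div_le_iff₀ hk0, mul_assoc, ← pow_succ]
    nlinarith [hp i]

lemma eventually_le_child {ι : Type*} [Finite ι] {p : ι → ℝ} {t k : ℝ} (hk : 0 < k)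
    (hp : ∀ i, 0 < p i) : ∀ᶠ n in atTop, ∀ i, t ≤ p i * (n - t) / k :=
  eventually_all.2 fun i =>
    (((tendsto_atTop_add_const_right _ (-t) tendsto_id).const_mul_atTop (hp i)).atTop_div_const
      hk).eventually_ge_atTop t

structure DNTreeRecurrence_s2 {ι : Type*} [Fintype ι] (t k : ℝ) (p : ι → ℝ) (T : ℝ → ℝ) : Prop where
  eq_one_of_le : ∀ n ≤ t, T n = 1
  eq_one_add_sum : ∀ n, t < n → T n = 1 + ∑ i, T (p i * (n - t) / k)

namespace DNTreeRecurrence_s2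

variable {ι : Type*} [Fintype ι] {t k s : ℝ} {p : ι → ℝ} {T : ℝ → ℝ}

lemma bddAbove_image_Iic (hT : DNTreeRecurrence_s2 t k p T) (ht : 0 < t) (hk : 1 < k)
    (hp : ∀ i, 0 ≤ p i ∧ p i ≤ 1) (b : ℝ) : BddAbove (T '' Set.Iic b) := by
  have hk0 : 0 < k := one_pos.trans hk
  induction b using induction_on_children ht hk hp with
  | base b hb =>
    refine ⟨1, ?_⟩
    rintro _ ⟨n, hn, rfl⟩
    exact (hT.eq_one_of_le n (le_trans hn hb)).le
  | step b _ ih =>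
    choose M hM using ih
    refine ⟨max 1 (1 + ∑ i, M i), ?_⟩
    rintro _ ⟨n, hn, rfl⟩
    rcases le_or_gt n t with hnt | hnt
    · exact (hT.eq_one_of_le n hnt).le.trans (le_max_left _ _)
    rw [hT.eq_one_add_sum n hnt]
    have hchild : ∀ i, p i * (n - t) / k ≤ p i * (b - t) / k := fun i => by
      gcongr
      · exact (hp i).1
      · exact hn
    refine le_max_of_le_right ?_
    gcongr with i
    exact hM i ⟨_, hchild i, rfl⟩

lemma add_inv_card_sub_one_eq_sum (hT : DNTreeRecurrence_s2 t k p T) (hd : 1 < Fintype.card ι)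
    {n : ℝ} (hn : t < n) :
    T n + ((Fintype.card ι : ℝ) - 1)⁻¹ =
      ∑ i, (T (p i * (n - t) / k) + ((Fintype.card ι : ℝ) - 1)⁻¹) := by
  have hc : ((Fintype.card ι : ℝ) - 1) * ((Fintype.card ι : ℝ) - 1)⁻¹ = 1 :=
    mul_inv_cancel₀ (sub_ne_zero.2 (by exact_mod_cast hd.ne'))
  rw [hT.eq_one_add_sum n hn, sum_add_distrib, sum_const, card_univ, nsmul_eq_mul]
  linear_combination -hc

lemma rpow_div_le (hT : DNTreeRecurrence_s2 t k p T) (ht : 0 < t) (hk : 1 < k)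
    (hp : ∀ i, 0 ≤ p i ∧ p i ≤ 1) (hs0 : 0 ≤ s) (hs1 : s ≤ 1) (hs : ∑ i, p i ^ s = k ^ s)
    {n : ℝ} (hn : 0 ≤ n) : (n / t) ^ s ≤ T n := by
  have hk0 : 0 < k := one_pos.trans hk
  induction n using induction_on_children ht hk hp with
  | base n hnt =>
    rw [hT.eq_one_of_le n hnt]
    exact Real.rpow_le_one (div_nonneg hn ht.le) ((div_le_one ht).2 hnt) hs0
  | step n hnt ih =>
    have hx : 0 ≤ (n - t) / t := div_nonneg (by linarith) ht.le
    have hchild : ∀ i, ((p i * (n - t) / k) / t) = p i * ((n - t) / t) / k := fun i => by ring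
    calc (n / t) ^ s = ((n - t) / t + 1) ^ s := by congr 1; field_simp; ring
      _ ≤ ((n - t) / t) ^ s + 1 ^ s := Real.rpow_add_le_add_rpow hx zero_le_one hs0 hs1
      _ = 1 + ∑ i, ((p i * (n - t) / k) / t) ^ s := by
        simp_rw [hchild]
        rw [Real.one_rpow, add_comm, sum_rpow_mul_div_eq (fun i => (hp i).1) hk0 hs hx]
      _ ≤ T n := by
        rw [hT.eq_one_add_sum n hnt]
        gcongr with i
        exact ih i (div_nonneg (mul_nonneg (hp i).1 (by linarith)) hk0.le)

lemma exists_le_mul_rpow (hT : DNTreeRecurrence_s2 t k p T) (ht : 0 < t) (hk : 1 < k)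
    (hp : ∀ i, 0 < p i ∧ p i ≤ 1) (hs0 : 0 ≤ s) (hs : ∑ i, p i ^ s = k ^ s)
    (hd : 1 < Fintype.card ι) : ∃ C, ∀ n, t ≤ n → T n ≤ C * n ^ s := by
  have hk0 : 0 < k := one_pos.trans hk
  have hp' : ∀ i, 0 ≤ p i ∧ p i ≤ 1 := fun i => ⟨(hp i).1.le, (hp i).2⟩
  set c : ℝ := ((Fintype.card ι : ℝ) - 1)⁻¹
  have hc : 0 < c := inv_pos.2 (sub_pos.2 (by exact_mod_cast hd))
  obtain ⟨n₂, hn₂⟩ := eventually_atTop.1 (eventually_le_child (t := t) hk0 fun i => (hp i).1)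
  set b := max n₂ t
  obtain ⟨M, hM⟩ := hT.bddAbove_image_Iic ht hk hp' b
  have hM1 : 1 ≤ M := hT.eq_one_of_le t le_rfl ▸ hM ⟨t, Set.mem_Iic.2 (le_max_right _ _), rfl⟩
  set C := (M + c) / t ^ s
  have hC : 0 ≤ C := div_nonneg (by linarith) (Real.rpow_nonneg ht.le s)
  have bounded : ∀ n, t ≤ n → n ≤ b → T n + c ≤ C * n ^ s := fun n htn hnb => calc
    T n + c ≤ M + c := by gcongr; exact hM ⟨n, hnb, rfl⟩
    _ = C * t ^ s := (div_mul_cancel₀ _ (Real.rpow_pos_of_pos ht s).ne').symm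
    _ ≤ C * n ^ s := by gcongr
  suffices h : ∀ n, t ≤ n → T n + c ≤ C * n ^ s from
    ⟨C, fun n hn => (le_add_of_nonneg_right hc.le).trans (h n hn)⟩
  intro n
  induction n using induction_on_children ht hk hp' with
  | base n hnt => exact fun htn => bounded n htn (hnt.trans (le_max_right _ _))
  | step n hnt ih =>
    intro htn
    rcases le_or_gt n b with hnb | hnb
    · exact bounded n htn hnb
    have hn₂' : ∀ i, t ≤ p i * (n - t) / k := hn₂ n (le_max_left _ _ |>.trans hnb.le)
    calc T n + c = ∑ i, (T (p i * (n - t) / k) + c) := hT.add_inv_card_sub_one_eq_sum hd hnt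
      _ ≤ ∑ i, C * (p i * (n - t) / k) ^ s := sum_le_sum fun i _ => ih i (hn₂' i)
      _ = C * (n - t) ^ s := by
        rw [← mul_sum, sum_rpow_mul_div_eq (fun i => (hp i).1.le) hk0 hs (by linarith)]
      _ ≤ C * n ^ s := by gcongr; linarith

end DNTreeRecurrence_s2

/-- The one-parameter DN-tree size recurrence `T'` satisfies
`T'(N) = Θ(N^s)` as `N → ∞`, where `s` is the real number satisfying
`p₀^s + p₁^s + p₂^s + p₃^s = k^s`. -/
theorem dn_tree_size_asymptotics
    (t k : ℝ) (ht : 0 < t) (hk : 1 < k)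
    (p : Fin 4 → ℝ) (hp : ∀ i, 0 < p i ∧ p i < 1)
    (hpsum : ∑ i : Fin 4, p i = 1)
    (T' : ℝ → ℝ)
    (hT'_base : ∀ n : ℝ, n ≤ t → T' n = 1)
    (hT'_rec : ∀ n : ℝ, n > t →
      T' n = 1 + ∑ i : Fin 4, T' (p i * (n - t) / k))
    (s : ℝ) (hs : ∑ i : Fin 4, p i ^ s = k ^ s) :
    ∃ c₁ c₂ N₀ : ℝ, 0 < c₁ ∧ c₁ ≤ c₂ ∧
      ∀ N : ℝ, N ≥ N₀ → c₁ * N ^ s ≤ T' N ∧ T' N ≤ c₂ * N ^ s := by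
  have hT : DNTreeRecurrence_s2 t k p T' := ⟨hT'_base, hT'_rec⟩
  obtain ⟨hs0, hs1⟩ := mem_Ioo_of_sum_rpow_eq_rpow hp hpsum hk hs
  obtain ⟨C, hC⟩ := hT.exists_le_mul_rpow ht hk (fun i => ⟨(hp i).1, (hp i).2.le⟩) hs0.le hs
    (by simp)
  have hlower : ∀ N, t ≤ N → 1 / t ^ s * N ^ s ≤ T' N := fun N hN => by
    rw [one_div_mul_eq_div, ← Real.div_rpow (ht.le.trans hN) ht.le]
    exact hT.rpow_div_le ht hk (fun i => ⟨(hp i).1.le, (hp i).2.le⟩) hs0.le hs1.le hs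
      (ht.le.trans hN)
  have hts : 0 < t ^ s := Real.rpow_pos_of_pos ht s
  refine ⟨1 / t ^ s, C, t, by positivity, ?_, fun N hN => ⟨hlower N hN, hC N hN⟩⟩
  exact le_of_mul_le_mul_right ((hlower t le_rfl).trans (hC t le_rfl)) hts
end

section
/- Let p_0, p_1, p_2, p_3 be real numbers with 0 < p_i < 1 for each i and p_0 + p_1 + p_2 + p_3 = 1, and let k ≥ 1 be a real number. If the real number s satisfies p_0^s + p_1^s + p_2^s + p_3^s = k^s and s > 0, then s ≤ log 4 / log(4k). -/
/-!
For `s > 1` every `p i ^ s` is strictly below `p i`, so `∑ p i ^ s < 1 ≤ k ^ s`; hence `s ≤ 1`.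
Then `x ↦ x ^ s` is concave, and Jensen's inequality with uniform weights bounds `∑ p i ^ s`
by its value at the uniform distribution, `4 ^ (1 - s)`. Taking logarithms in
`k ^ s ≤ 4 ^ (1 - s)` gives `s * log (4 * k) ≤ log 4`.
-/

open Finset Real

lemma le_one_of_one_le_sum_rpow {ι : Type*} [Fintype ι] {p : ι → ℝ}
    (hp : ∀ i, 0 < p i ∧ p i < 1) (hpsum : ∑ i, p i = 1) {s : ℝ}
    (hs : 1 ≤ ∑ i, p i ^ s) : s ≤ 1 := by
  by_contra! hs1
  have hne : (univ : Finset ι).Nonempty := nonempty_of_sum_ne_zero (hpsum ▸ one_ne_zero)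
  have hlt : ∑ i, p i ^ s < ∑ i, p i :=
    sum_lt_sum_of_nonempty hne fun i _ => by
      simpa using rpow_lt_rpow_of_exponent_gt (hp i).1 (hp i).2 hs1
  linarith

lemma sum_rpow_le_card_rpow_one_sub {ι : Type*} [Fintype ι] {p : ι → ℝ}
    (hp : ∀ i, 0 ≤ p i) (hpsum : ∑ i, p i = 1) {s : ℝ} (hs0 : 0 ≤ s) (hs1 : s ≤ 1) :
    ∑ i, p i ^ s ≤ (Fintype.card ι : ℝ) ^ (1 - s) := by
  have hn : (0 : ℝ) < Fintype.card ι := by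
    have : (univ : Finset ι).Nonempty := nonempty_of_sum_ne_zero (hpsum ▸ one_ne_zero)
    exact_mod_cast Fintype.card_pos_iff.2 this.to_type
  have hjensen := (concaveOn_rpow hs0 hs1).le_map_sum (t := univ)
    (w := fun _ => (Fintype.card ι : ℝ)⁻¹) (p := p) (fun _ _ => by positivity)
    (by simp [hn.ne']) (fun i _ => Set.mem_Ici.2 (hp i))
  simp only [smul_eq_mul, ← mul_sum, hpsum, mul_one] at hjensen
  rw [rpow_sub hn, rpow_one, div_eq_mul_inv, ← inv_rpow hn.le]
  exact (inv_mul_le_iff₀ hn).1 hjensen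

/-- if `s > 0` satisfies `p₀^s + p₁^s + p₂^s + p₃^s = k^s`, then
`s ≤ log 4 / log (4k)`. -/
theorem dn_tree_exponent_le_log_bound
    (p : Fin 4 → ℝ) (hp : ∀ i, 0 < p i ∧ p i < 1)
    (hpsum : ∑ i : Fin 4, p i = 1)
    (k : ℝ) (hk : 1 ≤ k)
    (s : ℝ) (hs : ∑ i : Fin 4, p i ^ s = k ^ s) (hspos : 0 < s) :
    s ≤ Real.log 4 / Real.log (4 * k) := by
  have hk0 : 0 < k := by linarith
  have hs1 : s ≤ 1 := le_one_of_one_le_sum_rpow hp hpsum (hs ▸ one_le_rpow hk hspos.le)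
  have hbound : k ^ s ≤ (4 : ℝ) ^ (1 - s) := by
    simpa [hs] using sum_rpow_le_card_rpow_one_sub (fun i => (hp i).1.le) hpsum hspos.le hs1
  have hlog := log_le_log (rpow_pos_of_pos hk0 s) hbound
  rw [log_rpow hk0, log_rpow (by norm_num)] at hlog
  rw [le_div_iff₀ (log_pos (by linarith)), log_mul (by norm_num) hk0.ne']
  linarith
end

section
/- Let p_0, p_1, p_2, p_3 be real numbers with 0 < p_i < 1 for each i and p_0 + p_1 + p_2 + p_3 = 1, and let k ≥ 1 be a real number. If the real number s satisfies p_0^s + p_1^s + p_2^s + p_3^s = k^s and s > 0, then s ≤ 1. -/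
theorem Finset.sum_rpow_lt_sum_of_lt_one {ι : Type*} {t : Finset ι} (ht : t.Nonempty)
    {p : ι → ℝ} (hp : ∀ i ∈ t, 0 < p i ∧ p i < 1) {s : ℝ} (hs : 1 < s) :
    ∑ i ∈ t, p i ^ s < ∑ i ∈ t, p i :=
  Finset.sum_lt_sum_of_nonempty ht fun i hi =>
    Real.rpow_lt_self_of_lt_one (hp i hi).1 (hp i hi).2 hs

theorem dn_tree_exponent_le_one_general
    (p : Fin 4 → ℝ) (hp : ∀ i, 0 < p i ∧ p i < 1)
    (hpsum : ∑ i : Fin 4, p i = 1)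
    (k : ℝ) (hk : 1 ≤ k)
    (s : ℝ) (hs : ∑ i : Fin 4, p i ^ s = k ^ s) :
    s ≤ 1 := by
  by_contra! hs_gt
  have hsum_lt : k ^ s < 1 := by
    rw [← hs, ← hpsum]
    exact Finset.sum_rpow_lt_sum_of_lt_one Finset.univ_nonempty (fun i _ => hp i) hs_gt
  have hk_pow : 1 ≤ k ^ s := Real.one_le_rpow hk (by linarith)
  linarith

/-- if `s > 0` satisfies `p₀^s + p₁^s + p₂^s + p₃^s = k^s` with
`k ≥ 1`, then `s ≤ 1`. -/
theorem dn_tree_exponent_le_one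
    (p : Fin 4 → ℝ) (hp : ∀ i, 0 < p i ∧ p i < 1)
    (hpsum : ∑ i : Fin 4, p i = 1)
    (k : ℝ) (hk : 1 ≤ k)
    (s : ℝ) (hs : ∑ i : Fin 4, p i ^ s = k ^ s) (hspos : 0 < s) :
    s ≤ 1 :=
  dn_tree_exponent_le_one_general p hp hpsum k hk s hs
end
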